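/- arXiv:1810.11722 — 6 statements merged into one kernel-verified Lean document; each statement's English description precedes it below -/
import Mathlib

section
/- Let K be a field and let F = K(X,Y) be the rational function field in two variables over K. Then X·Y does not belong to K(X) + K(Y); that is, there exist no u ∈ K(X) and v ∈ K(Y) with X·Y = u + v. -/
noncomputable section
set_option synthInstance.maxHeartbeats 400000
set_option maxHeartbeats 1000000

/-- The rational function field `K(X,Y)`, realized as the fraction field of the
polynomial ring `K[X,Y]` in two variables. -/
abbrev RatFuncTwo (K : Type*) [Field K] : Type _ :=
  FractionRing (MvPolynomial (Fin 2) K)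

/-- The image in `K(X,Y)` of the variable `Xᵢ`. -/
def genVar (K : Type*) [Field K] (i : Fin 2) : RatFuncTwo K :=
  algebraMap (MvPolynomial (Fin 2) K) (RatFuncTwo K) (MvPolynomial.X i)

/-- The image of `K` in `K(X,Y)`. -/
def constSet (K : Type*) [Field K] : Set (RatFuncTwo K) :=
  Set.range ((algebraMap (MvPolynomial (Fin 2) K) (RatFuncTwo K)).comp
    (MvPolynomial.C : K →+* MvPolynomial (Fin 2) K))

/-- The subfield `K(Xᵢ)` of `K(X,Y)` generated by (the image of) `K` together with `Xᵢ`. -/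
def adjoinVar (K : Type*) [Field K] (i : Fin 2) : Subfield (RatFuncTwo K) :=
  Subfield.closure (constSet K ∪ {genVar K i})

open MvPolynomial

/-- supported is stable under pderiv -/
lemma pderiv_mem_supported {K : Type*} [Field K] {s : Set (Fin 2)} (j : Fin 2)
    {p : MvPolynomial (Fin 2) K} (hp : p ∈ supported K s) :
    (pderiv j) p ∈ supported K s := by
  unfold supported at *
  induction hp using Algebra.adjoin_induction with
  | mem x hx =>
      obtain ⟨k, hk, rfl⟩ := hx
      by_cases h : k = j
      · subst h; rw [pderiv_X_self]; exact one_mem _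
      · rw [pderiv_X_of_ne h]; exact zero_mem _
  | algebraMap r => simpa using zero_mem (Algebra.adjoin K (X '' s : Set (MvPolynomial (Fin 2) K)))
  | add x y hx hy ihx ihy => rw [map_add]; exact add_mem ihx ihy
  | mul x y hx hy ihx ihy =>
      rw [pderiv_mul]
      exact add_mem (mul_mem ihx (Algebra.adjoin_mono (by simp) hy ))
        (mul_mem (Algebra.adjoin_mono (by simp) hx) ihy)

lemma pderiv_eq_zero_of_supported {K : Type*} [Field K] {i j : Fin 2} (hij : j ≠ i)
    {p : MvPolynomial (Fin 2) K} (hp : p ∈ supported K ({i} : Set (Fin 2))) :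
    (pderiv j) p = 0 := by
  apply pderiv_eq_zero_of_notMem_vars
  intro hmem
  have := mem_supported.mp hp hmem
  simp only [Set.mem_singleton_iff] at this
  exact hij this

/-- The subfield of fractions of polynomials supported on `{i}`. -/
def fracSupported (K : Type*) [Field K] (i : Fin 2) : Subfield (RatFuncTwo K) where
  carrier := {a | ∃ p q : MvPolynomial (Fin 2) K, p ∈ supported K ({i} : Set (Fin 2)) ∧
      q ∈ supported K ({i} : Set (Fin 2)) ∧ q ≠ 0 ∧
      a * algebraMap (MvPolynomial (Fin 2) K) (RatFuncTwo K) q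
        = algebraMap (MvPolynomial (Fin 2) K) (RatFuncTwo K) p}
  zero_mem' := ⟨0, 1, zero_mem _, one_mem _, one_ne_zero, by simp⟩
  one_mem' := ⟨1, 1, one_mem _, one_mem _, one_ne_zero, by simp⟩
  add_mem' := by
    rintro a b ⟨p, q, hp, hq, hq0, hE⟩ ⟨p', q', hp', hq', hq0', hE'⟩
    exact ⟨p * q' + p' * q, q * q', add_mem (mul_mem hp hq') (mul_mem hp' hq),
      mul_mem hq hq', mul_ne_zero hq0 hq0',
      by rw [map_add, map_mul, map_mul, map_mul, ← hE, ← hE']; ring⟩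
  mul_mem' := by
    rintro a b ⟨p, q, hp, hq, hq0, hE⟩ ⟨p', q', hp', hq', hq0', hE'⟩
    exact ⟨p * p', q * q', mul_mem hp hp', mul_mem hq hq', mul_ne_zero hq0 hq0',
      by rw [map_mul, map_mul, ← hE, ← hE']; ring⟩
  neg_mem' := by
    rintro a ⟨p, q, hp, hq, hq0, hE⟩
    exact ⟨-p, q, neg_mem hp, hq, hq0, by rw [map_neg, ← hE]; ring⟩
  inv_mem' := by
    rintro a ⟨p, q, hp, hq, hq0, hE⟩
    by_cases ha : a = 0
    · exact ⟨0, 1, zero_mem _, one_mem _, one_ne_zero, by simp [ha]⟩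
    · have hinj := IsFractionRing.injective (MvPolynomial (Fin 2) K) (RatFuncTwo K)
      have hq0' : algebraMap (MvPolynomial (Fin 2) K) (RatFuncTwo K) q ≠ 0 := by
        simpa using (map_ne_zero_iff _ hinj).mpr hq0
      have hp0' : algebraMap (MvPolynomial (Fin 2) K) (RatFuncTwo K) p ≠ 0 := by
        rw [← hE]; exact mul_ne_zero ha hq0'
      have hp0 : p ≠ 0 := by
        intro h; apply hp0'; rw [h, map_zero]
      refine ⟨q, p, hq, hp, hp0, ?_⟩
      rw [← hE]
      field_simp
  
lemma adjoinVar_le_fracSupported (K : Type*) [Field K] (i : Fin 2) :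
    adjoinVar K i ≤ fracSupported K i := by
  apply Subfield.closure_le.mpr
  rintro a (⟨k, rfl⟩ | ha)
  · exact ⟨C k, 1, by simpa using Subalgebra.algebraMap_mem (supported K ({i} : Set (Fin 2))) k, one_mem _, one_ne_zero, by simp⟩
  · simp only [Set.mem_singleton_iff] at ha
    subst ha
    exact ⟨X i, 1, by simp [X_mem_supported], one_mem _, one_ne_zero, by simp [genVar]⟩

/-- In `K(X,Y)`, the element `X·Y` does not belong to `K(X) + K(Y)`:
there are no `u ∈ K(X)` and `v ∈ K(Y)` with `X·Y = u + v`. -/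
theorem mul_gen_not_mem_add (K : Type*) [Field K] :
    ¬ ∃ u ∈ adjoinVar K 0, ∃ v ∈ adjoinVar K 1,
        genVar K 0 * genVar K 1 = u + v := by
  rintro ⟨u, hu, v, hv, hEq⟩
  obtain ⟨p, q, hp, hq, hq0, hE⟩ := adjoinVar_le_fracSupported K 0 hu
  obtain ⟨r, s, hr, hs, hs0, hE'⟩ := adjoinVar_le_fracSupported K 1 hv
  set φ := algebraMap (MvPolynomial (Fin 2) K) (RatFuncTwo K) with hφ
  have hinj := IsFractionRing.injective (MvPolynomial (Fin 2) K) (RatFuncTwo K)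
  have key : (X 0 * X 1 * q * s : MvPolynomial (Fin 2) K) = p * s + r * q := by
    apply hinj
    have hEq' : φ (X 0) * φ (X 1) = u + v := hEq
    rw [map_mul, map_mul, map_mul, map_add, map_mul, map_mul]
    linear_combination (φ q * φ s) * hEq' + φ s * hE + φ q * hE'
  -- vanishing of derivatives
  have h01 : (0 : Fin 2) ≠ 1 := by decide
  have h10 : (1 : Fin 2) ≠ 0 := by decide
  have hp1 : pderiv 1 p = 0 := pderiv_eq_zero_of_supported h10 hp
  have hq1 : pderiv 1 q = 0 := pderiv_eq_zero_of_supported h10 hq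
  have hr0 : pderiv 0 r = 0 := pderiv_eq_zero_of_supported h01 hr
  have hs0' : pderiv 0 s = 0 := pderiv_eq_zero_of_supported h01 hs
  have hs1 : pderiv 0 (pderiv 1 s) = 0 :=
    pderiv_eq_zero_of_supported h01 (pderiv_mem_supported 1 hs)
  have hr1 : pderiv 0 (pderiv 1 r) = 0 :=
    pderiv_eq_zero_of_supported h01 (pderiv_mem_supported 1 hr)
  have E2 : X 0 * q * s + X 0 * X 1 * q * pderiv 1 s
      = p * pderiv 1 s + pderiv 1 r * q := by
    have h := congrArg (pderiv 1) key
    simp only [map_add, pderiv_mul, pderiv_X_self, pderiv_X_of_ne h01, hp1, hq1,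
      mul_zero, zero_mul, add_zero, zero_add, mul_one, one_mul] at h
    linear_combination h
  have E3 : X 1 * q * s + X 0 * X 1 * pderiv 0 q * s
      = pderiv 0 p * s + r * pderiv 0 q := by
    have h := congrArg (pderiv 0) key
    simp only [map_add, pderiv_mul, pderiv_X_self, pderiv_X_of_ne h10, hr0, hs0',
      mul_zero, zero_mul, add_zero, zero_add, mul_one, one_mul] at h
    linear_combination h
  have E4 : q * s + X 0 * pderiv 0 q * s + X 1 * q * pderiv 1 s
      + X 0 * X 1 * pderiv 0 q * pderiv 1 s
      = pderiv 0 p * pderiv 1 s + pderiv 1 r * pderiv 0 q := by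
    have h := congrArg (pderiv 0) E2
    simp only [map_add, pderiv_mul, pderiv_X_self, pderiv_X_of_ne h10, hr0, hs0',
      hs1, hr1, mul_zero, zero_mul, add_zero, zero_add, mul_one, one_mul] at h
    linear_combination h
  have hw : (pderiv 1 r * s - r * pderiv 1 s) * (p * pderiv 0 q - pderiv 0 p * q) = 0 := by
    linear_combination (X 1 * q * s + X 0 * X 1 * pderiv 0 q * s) * E2
      + (p * pderiv 1 s + pderiv 1 r * q) * E3
      - (X 0 * X 1 * q * s) * E4
      - (pderiv 0 p * pderiv 1 s + pderiv 1 r * pderiv 0 q) * key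
  have hX0 : (X 0 : MvPolynomial (Fin 2) K) ≠ 0 := X_ne_zero 0
  have hX1 : (X 1 : MvPolynomial (Fin 2) K) ≠ 0 := X_ne_zero 1
  rcases mul_eq_zero.mp hw with h1 | h2
  · -- r' s = r s' : derive X0 * q * s^2 = 0
    have : (X 0 : MvPolynomial (Fin 2) K) * (q * (s * s)) = 0 := by
      linear_combination s * E2 - pderiv 1 s * key + q * h1
    exact (mul_ne_zero hX0 (mul_ne_zero hq0 (mul_ne_zero hs0 hs0))) this
  · -- p q' = p' q : derive X1 * q^2 * s = 0
    have : (X 1 : MvPolynomial (Fin 2) K) * (q * q * s) = 0 := by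
      linear_combination q * E3 - pderiv 0 q * key - s * h2
    exact (mul_ne_zero hX1 (mul_ne_zero (mul_ne_zero hq0 hq0) hs0)) this
end
end

section
/- Let K be a field and let F = K(X,Y) be the rational function field in two variables over K. Then X + Y does not belong to K(X)·K(Y); that is, there exist no u ∈ K(X) and v ∈ K(Y) with X + Y = u·v. -/
noncomputable section

/-!
Write `u = a(X)/b(X)` and `v = c(Y)/d(Y)`. Clearing denominators gives
`(X + Y)·b(X)·d(Y) = a(X)·c(Y)` in `K[X,Y]`. The specialization `X ↦ T, Y ↦ -T` kills `X + Y`, so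
`a(T)·c(-T) = 0`; since `T` and `-T` are transcendental over `K`, this forces `a = 0` or `c = 0`,
and then `X + Y = u·v = 0`, which is absurd.
-/

open Polynomial

theorem Ideal.IsPrime.mem_or_mem_of_map_eq_div_mul_div {R F : Type*} [CommRing R] [Field F]
    {f : R →+* F} (hf : Function.Injective f) {P : Ideal R} (hP : P.IsPrime) {z a b c d : R}
    (hzP : z ∈ P) (hz : f z ≠ 0) (h : f z = f a / f b * (f c / f d)) : a ∈ P ∨ c ∈ P := by
  have hb : f b ≠ 0 := fun hb ↦ hz (by simp [h, hb])
  have hd : f d ≠ 0 := fun hd ↦ hz (by simp [h, hd])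
  have hclear : z * b * d = a * c := hf (by simp only [map_mul, h]; field_simp)
  exact hP.mem_or_mem (hclear ▸ P.mul_mem_right d (P.mul_mem_right b hzP))

namespace RatFuncTwo

variable (K : Type*) [Field K]

def restrictAntidiag : MvPolynomial (Fin 2) K →ₐ[K] K[X] :=
  MvPolynomial.aeval ![X, -X]

theorem X_zero_add_X_one_mem_ker :
    MvPolynomial.X 0 + MvPolynomial.X 1 ∈ RingHom.ker (restrictAntidiag K) := by
  simp [restrictAntidiag]

theorem X_zero_add_X_one_ne_zero :
    (MvPolynomial.X 0 + MvPolynomial.X 1 : MvPolynomial (Fin 2) K) ≠ 0 := fun h ↦ by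
  simpa using congrArg (MvPolynomial.eval ![1, 0]) h

theorem transcendental_restrictAntidiag_X (i : Fin 2) :
    Transcendental K (restrictAntidiag K (MvPolynomial.X i)) := by
  have hX : Transcendental K (X : K[X]) := transcendental_X K
  fin_cases i
  · simpa [restrictAntidiag] using hX
  · have hnegX : Transcendental K (-X : K[X]) := fun h ↦ hX (by simpa using h.neg)
    simpa [restrictAntidiag] using hnegX

theorem eq_zero_of_aeval_X_mem_ker {i : Fin 2} {p : K[X]}
    (hp : aeval (MvPolynomial.X i) p ∈ RingHom.ker (restrictAntidiag K)) : p = 0 := by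
  rw [RingHom.mem_ker, ← aeval_algHom_apply] at hp
  exact transcendental_iff.mp (transcendental_restrictAntidiag_X K i) p hp

theorem adjoinVar_eq_adjoin_genVar (i : Fin 2) :
    adjoinVar K i = (IntermediateField.adjoin K {genVar K i}).toSubfield := by
  rw [IntermediateField.adjoin_toSubfield, adjoinVar, constSet,
    IsScalarTower.algebraMap_eq K (MvPolynomial (Fin 2) K) (RatFuncTwo K)]
  rfl

theorem exists_eq_div_of_mem_adjoinVar {i : Fin 2} {u : RatFuncTwo K} (hu : u ∈ adjoinVar K i) :
    ∃ a b : K[X], u = algebraMap _ _ (aeval (MvPolynomial.X i : MvPolynomial (Fin 2) K) a) /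
      algebraMap _ _ (aeval (MvPolynomial.X i : MvPolynomial (Fin 2) K) b) := by
  rw [adjoinVar_eq_adjoin_genVar] at hu
  simpa only [← aeval_algebraMap_apply, genVar] using
    (IntermediateField.mem_adjoin_simple_iff K u).mp hu

end RatFuncTwo

/-- In `K(X,Y)`, the element `X + Y` does not belong to `K(X)·K(Y)`:
there are no `u ∈ K(X)` and `v ∈ K(Y)` with `X·Y = u + v`. -/
theorem add_gen_not_mem_mul (K : Type*) [Field K] :
    ¬ ∃ u ∈ adjoinVar K 0, ∃ v ∈ adjoinVar K 1,
        genVar K 0 + genVar K 1 = u * v := by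
  rintro ⟨u, hu, v, hv, h⟩
  obtain ⟨a, b, rfl⟩ := RatFuncTwo.exists_eq_div_of_mem_adjoinVar K hu
  obtain ⟨c, d, rfl⟩ := RatFuncTwo.exists_eq_div_of_mem_adjoinVar K hv
  have hinj := IsFractionRing.injective (MvPolynomial (Fin 2) K) (RatFuncTwo K)
  have hsum : algebraMap (MvPolynomial (Fin 2) K) (RatFuncTwo K) (.X 0 + .X 1) ≠ 0 :=
    (map_ne_zero_iff _ hinj).mpr (RatFuncTwo.X_zero_add_X_one_ne_zero K)
  rw [genVar, genVar, ← map_add] at h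
  rcases (RingHom.ker_isPrime _).mem_or_mem_of_map_eq_div_mul_div hinj
    (RatFuncTwo.X_zero_add_X_one_mem_ker K) hsum h with ha | hc
  · exact hsum (by simpa [RatFuncTwo.eq_zero_of_aeval_X_mem_ker K ha] using h)
  · exact hsum (by simpa [RatFuncTwo.eq_zero_of_aeval_X_mem_ker K hc] using h)

end
end

section
/- Let Ω be a field, E an algebraically closed subfield of Ω, and a, b, d ∈ Ω algebraically independent over E. Write acl(F) for the relative algebraic closure in Ω of a subfield F of Ω, and E(a), E(a,d), E(b,d) for the subfields of Ω generated over E by the indicated elements. Then (a + d)·b ∈ acl(E(a,d))·acl(E(b,d)), but (a + d)·b ∉ acl(E(a,d)) and (a + d)·b ∉ acl(E(a))·acl(E(b,d)). -/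
/-!
The first two claims are immediate: `a + d ∈ E(a,d)` and `b ∈ E(b,d)`, while
`b = (a + d)b / (a + d)` is transcendental over `E(a,d)`.

For the third, suppose `(a + d)b = u v` with `u` algebraic over `E(a)` and `v` algebraic over
`E(b,d)`. Then `u = α a + β` with `α = b/v` and `β = bd/v` algebraic over `E(b,d)`, over which `a`
is transcendental. Hence a nonzero `P ∈ E[X][Y]` with `P(a, u) = 0` satisfies `P(X, αX + β) = 0`
identically, so `α e + β` is algebraic over `E`, hence lies in `E`, for all but finitely many
`e ∈ E`. Two such `e` give `α, β ∈ E`, whence `d = β / α ∈ E`, a contradiction.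
-/

open Pointwise

/-- The relative algebraic closure of a subfield `F` in `Ω`: the set of elements of `Ω`
that are algebraic over `F`. -/
def relAlgClosure {Ω : Type*} [Field Ω] (F : Subfield Ω) : Set Ω :=
  {x : Ω | IsAlgebraic F x}

open Polynomial

section Bivariate

/-! For `P : R[X][X]`, `P.eval₂ (aeval x).toRingHom y` is the value `P(x, y)`, the outer
variable being `y`. -/

variable {R A : Type*} [CommRing R] [CommRing A] [Algebra R A]

variable (R) in
theorem aeval_adjoin_singleton_surjective (a : A) :
    Function.Surjective
      (aeval (R := R) (⟨a, Algebra.self_mem_adjoin_singleton R a⟩ : Algebra.adjoin R {a})) := by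
  rintro ⟨y, hy⟩
  rw [Algebra.adjoin_singleton_eq_range_aeval] at hy
  obtain ⟨q, rfl⟩ := hy
  exact ⟨q, Subtype.ext (aeval_subalgebra_coe ..)⟩

theorem exists_eval₂_aeval_eq_zero_of_isAlgebraic_adjoin {a u : A}
    (h : IsAlgebraic (Algebra.adjoin R {a}) u) :
    ∃ P : R[X][X], P ≠ 0 ∧ P.eval₂ (aeval a).toRingHom u = 0 := by
  obtain ⟨p, hp0, hpu⟩ := h
  obtain ⟨P, rfl⟩ := map_surjective _ (aeval_adjoin_singleton_surjective R a) p
  refine ⟨P, fun hP ↦ hp0 (by rw [hP, Polynomial.map_zero]), ?_⟩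
  have hcomp : (algebraMap (Algebra.adjoin R {a}) A).comp
      (aeval (R := R) (⟨a, Algebra.self_mem_adjoin_singleton R a⟩ : Algebra.adjoin R {a})).toRingHom
      = (aeval a).toRingHom := ringHom_ext (fun _ ↦ by simp) (by simp)
  rwa [aeval_def, eval₂_map, hcomp] at hpu

theorem eval₂_aeval_aeval_eq_aeval_eval (P : R[X][X]) (q : R[X]) (x : A) :
    P.eval₂ (aeval x).toRingHom (aeval x q) = aeval x (P.eval q) := by
  simpa using (hom_eval₂ P (RingHom.id _) (aeval x).toRingHom q).symm

theorem eval₂_aeval_eq_zero_of_transcendental {B : Type*} [CommRing B] [Algebra R B] {a : A}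
    (ha : Transcendental R a) {P : R[X][X]} {q : R[X]}
    (h : P.eval₂ (aeval a).toRingHom (aeval a q) = 0) (x : B) :
    P.eval₂ (aeval x).toRingHom (aeval x q) = 0 := by
  rw [eval₂_aeval_aeval_eq_aeval_eval] at h ⊢
  rw [transcendental_iff.1 ha _ h, map_zero]

theorem isAlgebraic_of_eval₂_aeval_eq_zero {P : R[X][X]} {r : R}
    (hr : ¬ P.leadingCoeff.IsRoot r) {y : A}
    (h : P.eval₂ (aeval (algebraMap R A r)).toRingHom y = 0) : IsAlgebraic R y := by
  refine ⟨P.map (evalRingHom r), fun h0 ↦ hr ?_, ?_⟩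
  · simpa using congrArg (coeff · P.natDegree) h0
  · have hcomp : (algebraMap R A).comp (evalRingHom r) = (aeval (algebraMap R A r)).toRingHom :=
      ringHom_ext (fun _ ↦ by simp) (by simp)
    rwa [aeval_def, eval₂_map, hcomp]

end Bivariate

section Subfields

variable {Ω : Type*} [Field Ω]

theorem mem_relAlgClosure_of_mem {F : Subfield Ω} {x : Ω} (hx : x ∈ F) : x ∈ relAlgClosure F :=
  isAlgebraic_algebraMap (⟨x, hx⟩ : F)

theorem mem_algebraicClosure_of_mem {F : Subfield Ω} {x : Ω} (hx : x ∈ F) :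
    x ∈ algebraicClosure F Ω :=
  IntermediateField.algebraMap_mem _ (⟨x, hx⟩ : F)

theorem Transcendental.toSubfield_algebraicClosure {F : Subfield Ω} {a : Ω}
    (ha : Transcendental F a) : Transcendental (algebraicClosure F Ω).toSubfield a :=
  fun h ↦ ha (IsAlgebraic.restrictScalars (S := algebraicClosure F Ω) F h)

namespace Subfield

variable {E : Subfield Ω}

theorem closure_union_eq_toSubfield_adjoin (E : Subfield Ω) (S : Set Ω) :
    closure ((E : Set Ω) ∪ S) = (IntermediateField.adjoin E S).toSubfield := by
  rw [IntermediateField.adjoin_toSubfield]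
  exact congrArg (fun T ↦ closure (T ∪ S)) Subtype.range_coe.symm

theorem isAlgebraic_closure_union_iff {S : Set Ω} {x : Ω} :
    IsAlgebraic (closure ((E : Set Ω) ∪ S)) x ↔ IsAlgebraic (Algebra.adjoin E S) x := by
  rw [closure_union_eq_toSubfield_adjoin]
  exact IntermediateField.isAlgebraic_adjoin_iff

theorem transcendental_closure_union {ι : Type*} {x : ι → Ω} (hx : AlgebraicIndependent E x)
    {s : Set ι} {i : ι} (hi : i ∉ s) : Transcendental (closure ((E : Set Ω) ∪ x '' s)) (x i) :=
  fun h ↦ hx.transcendental_adjoin hi (isAlgebraic_closure_union_iff.1 h)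

theorem mem_of_isAlgebraic [IsAlgClosed E] {x : Ω} (hx : IsAlgebraic E x) : x ∈ E := by
  have hx' : x ∈ algebraicClosure E Ω := mem_algebraicClosure_iff.2 hx
  rw [IntermediateField.eq_bot_of_isAlgClosed_of_isAlgebraic (algebraicClosure E Ω),
    IntermediateField.mem_bot] at hx'
  obtain ⟨y, rfl⟩ := hx'
  exact y.2

theorem mem_of_mul_add_mem {α β e₁ e₂ : Ω} (he₁ : e₁ ∈ E) (he₂ : e₂ ∈ E) (hne : e₁ ≠ e₂)
    (h₁ : α * e₁ + β ∈ E) (h₂ : α * e₂ + β ∈ E) : α ∈ E ∧ β ∈ E := by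
  have hα : α = ((α * e₁ + β) - (α * e₂ + β)) / (e₁ - e₂) := by
    field_simp [sub_ne_zero.2 hne]
    ring
  have hαE : α ∈ E := hα ▸ E.div_mem (E.sub_mem h₁ h₂) (E.sub_mem he₁ he₂)
  exact ⟨hαE, by simpa using E.sub_mem h₁ (E.mul_mem hαE he₁)⟩

theorem mem_of_isAlgebraic_adjoin_mul_add [IsAlgClosed E] {K : Subfield Ω} (hEK : E ≤ K)
    {a α β : Ω} (ha : Transcendental K a) (hα : α ∈ K) (hβ : β ∈ K)
    (h : IsAlgebraic (Algebra.adjoin E {a}) (α * a + β)) : α ∈ E ∧ β ∈ E := by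
  obtain ⟨P, hP0, hPa⟩ := exists_eval₂_aeval_eq_zero_of_isAlgebraic_adjoin h
  let q : K[X] := C ⟨α, hα⟩ * X + C ⟨β, hβ⟩
  have hq (x : Ω) : aeval x q = α * x + β := by simp [q]; rfl
  have hcomp (x : Ω) : (aeval x).toRingHom.comp (mapRingHom (inclusion hEK)) =
      (aeval (R := E) x).toRingHom := ringHom_ext (fun _ ↦ by simp; rfl) (by simp)
  -- `a` is generic over `K`, so `P(X, αX + β) = 0` holds identically.
  have hP (x : Ω) : P.eval₂ (aeval x).toRingHom (α * x + β) = 0 := by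
    have := eval₂_aeval_eq_zero_of_transcendental ha (P := P.map (mapRingHom (inclusion hEK)))
      (q := q) (by rwa [eval₂_map, hcomp, hq]) x
    rwa [eval₂_map, hcomp, hq] at this
  have hgood (e : E) (he : ¬ P.leadingCoeff.IsRoot e) : α * e + β ∈ E :=
    mem_of_isAlgebraic (isAlgebraic_of_eval₂_aeval_eq_zero he (hP e))
  obtain ⟨e₁, he₁, e₂, he₂, hne⟩ :=
    (Set.infinite_univ.sdiff (finite_setOfPred_isRoot (leadingCoeff_ne_zero.2 hP0))).nontrivial
  exact mem_of_mul_add_mem e₁.2 e₂.2 (Subtype.coe_injective.ne hne) (hgood e₁ he₁.2)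
    (hgood e₂ he₂.2)

theorem add_mul_notMem_relAlgClosure_mul [IsAlgClosed E] {a b d : Ω}
    (ha : Transcendental (closure ((E : Set Ω) ∪ {b, d})) a) (hd : d ∉ E) (hb : b ≠ 0)
    (had : a + d ≠ 0) :
    (a + d) * b ∉ relAlgClosure (closure ((E : Set Ω) ∪ {a})) *
      relAlgClosure (closure ((E : Set Ω) ∪ {b, d})) := by
  set Fbd := closure ((E : Set Ω) ∪ {b, d})
  rintro ⟨u, hu, v, hv, huv⟩
  have hv0 : v ≠ 0 := by rintro rfl; exact mul_ne_zero had hb (by simpa using huv.symm)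
  have hu' : u = b / v * a + b * d / v := by
    field_simp
    linear_combination huv
  have hvK : v ∈ algebraicClosure Fbd Ω := mem_algebraicClosure_iff.2 hv
  have hbK := mem_algebraicClosure_of_mem (subset_closure (by simp) : b ∈ Fbd)
  have hdK := mem_algebraicClosure_of_mem (subset_closure (by simp) : d ∈ Fbd)
  obtain ⟨hαE, hβE⟩ := mem_of_isAlgebraic_adjoin_mul_add (K := (algebraicClosure Fbd Ω).toSubfield)
    (fun e he ↦ mem_algebraicClosure_of_mem (subset_closure (Or.inl he)))
    ha.toSubfield_algebraicClosure (div_mem hbK hvK) (div_mem (mul_mem hbK hdK) hvK)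
    (hu' ▸ isAlgebraic_closure_union_iff.1 hu)
  refine hd ?_
  convert E.div_mem hβE hαE using 1
  field_simp

end Subfield

end Subfields

/-- Let `Ω` be a field, `E` an algebraically closed subfield, and `a, b, d ∈ Ω`
algebraically independent over `E`. Then `(a + d)·b ∈ acl(E(a,d))·acl(E(b,d))`, but
`(a + d)·b ∉ acl(E(a,d))` and `(a + d)·b ∉ acl(E(a))·acl(E(b,d))`. -/
theorem a_add_d_mul_b_witness {Ω : Type*} [Field Ω] (E : Subfield Ω) [IsAlgClosed E]
    (a b d : Ω) (hindep : AlgebraicIndependent (↥E) ![a, b, d]) :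
    (a + d) * b ∈
        relAlgClosure (Subfield.closure ((E : Set Ω) ∪ {a, d})) *
          relAlgClosure (Subfield.closure ((E : Set Ω) ∪ {b, d})) ∧
      (a + d) * b ∉ relAlgClosure (Subfield.closure ((E : Set Ω) ∪ {a, d})) ∧
      (a + d) * b ∉
        relAlgClosure (Subfield.closure ((E : Set Ω) ∪ {a})) *
          relAlgClosure (Subfield.closure ((E : Set Ω) ∪ {b, d})) := by
  set Fad := Subfield.closure ((E : Set Ω) ∪ {a, d})
  have hb : Transcendental Fad b := by
    have := Subfield.transcendental_closure_union hindep (s := {0, 2}) (i := 1) (by decide)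
    rwa [Set.image_pair] at this
  have ha : Transcendental (Subfield.closure ((E : Set Ω) ∪ {b, d})) a := by
    have := Subfield.transcendental_closure_union hindep (s := {1, 2}) (i := 0) (by decide)
    rwa [Set.image_pair] at this
  have hd : d ∉ E := fun h ↦ hindep.transcendental 2 (mem_relAlgClosure_of_mem h)
  have hb0 : b ≠ 0 := fun h ↦ hindep.transcendental 1 (h ▸ isAlgebraic_zero)
  have had : a + d ≠ 0 := fun h ↦ ha (mem_relAlgClosure_of_mem
    (eq_neg_of_add_eq_zero_left h ▸ neg_mem (Subfield.subset_closure (by simp))))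
  have hadF : a + d ∈ Fad :=
    add_mem (Subfield.subset_closure (by simp)) (Subfield.subset_closure (by simp))
  refine ⟨Set.mul_mem_mul (mem_relAlgClosure_of_mem hadF)
      (mem_relAlgClosure_of_mem (Subfield.subset_closure (by simp))), fun h ↦ ?_,
    Subfield.add_mul_notMem_relAlgClosure_mul ha hd hb0 had⟩
  exact hb <| IsAlgebraic.of_mul (mem_nonZeroDivisors_of_ne_zero had)
    (mem_relAlgClosure_of_mem hadF) h
end

section
/- Let L be a field, K a subfield of L, G an additive subgroup of L contained in K, t an element of L not in K, and a a nonzero element of K that is not in the image of ℤ in L. Then t/a belongs to the additive subgroup G + ℤ·(t/a) = {g + n·(t/a) : g ∈ G, n ∈ ℤ}, while t = a·(t/a) does not belong to G + ℤ·(t/a). -/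
theorem eq_mul_div_sub_of_eq_add_zsmul_div {L : Type*} [Field L] {t g a : L} {n : ℤ}
    (ha : a ≠ 0) (han : a ≠ n) (h : t = g + n • (t / a)) : t = g * a / (a - n) := by
  rw [zsmul_eq_mul] at h
  rw [eq_div_iff (sub_ne_zero.mpr han)]
  field_simp at h
  linear_combination h

theorem Subfield.mem_of_eq_add_zsmul_div {L : Type*} [Field L] (K : Subfield L) {t g a : L}
    {n : ℤ} (hg : g ∈ K) (haK : a ∈ K) (ha0 : a ≠ 0) (han : a ≠ n)
    (h : t = g + n • (t / a)) : t ∈ K := by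
  rw [eq_mul_div_sub_of_eq_add_zsmul_div ha0 han h]
  exact K.div_mem (K.mul_mem hg haK) (K.sub_mem haK (K.intCast_mem n))

/-- Let `L` be a field, `K` a subfield, `G` an additive subgroup of `L` contained in
`K`, `t ∈ L \ K`, and `a ∈ K` nonzero and not in the image of `ℤ` in `L`. Then
`t/a` belongs to the additive subgroup `G + ℤ·(t/a)`, while `t = a·(t/a)` does not. -/
theorem div_mem_not_mem_adjoined_group (L : Type*) [Field L] (K : Subfield L)
    (G : AddSubgroup L) (hGK : (G : Set L) ⊆ (K : Set L))
    (t : L) (ht : t ∉ K) (a : L) (haK : a ∈ K) (ha0 : a ≠ 0)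
    (haZ : a ∉ Set.range (Int.cast : ℤ → L)) :
    (∃ g ∈ G, ∃ n : ℤ, t / a = g + n • (t / a)) ∧
      (t = a * (t / a) ∧ ¬ ∃ g ∈ G, ∃ n : ℤ, t = g + n • (t / a)) := by
  refine ⟨⟨0, G.zero_mem, 1, by simp⟩, (mul_div_cancel₀ t ha0).symm, ?_⟩
  rintro ⟨g, hg, n, h⟩
  exact ht (K.mem_of_eq_add_zsmul_div (hGK hg) haK ha0 (fun han => haZ ⟨n, han.symm⟩) h)
end

section
/- Let K be an algebraically closed field. Call a subgroup H of the multiplicative group Kˣ radical if whenever u ∈ Kˣ and u^n ∈ H for some integer n ≥ 1, then u ∈ H. If U and V are radical subgroups of Kˣ, then the product set U·V = {u·v : u ∈ U, v ∈ V} (which is the subgroup generated by U and V) is again a radical subgroup of Kˣ. -/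
open Pointwise

def IsRadicalSubgroup {K : Type*} [Field K] (U : Subgroup Kˣ) : Prop :=
  ∀ (u : Kˣ) (n : ℕ), 1 ≤ n → u ^ n ∈ U → u ∈ U

theorem IsAlgClosed.exists_units_pow_eq {K : Type*} [Field K] [IsAlgClosed K] (a : Kˣ) {n : ℕ}
    (hn : 0 < n) : ∃ c : Kˣ, c ^ n = a := by
  obtain ⟨z, hz⟩ := IsAlgClosed.exists_pow_nat_eq (a : K) hn
  have hz0 : z ≠ 0 := ne_zero_pow hn.ne' (hz ▸ a.ne_zero)
  exact ⟨Units.mk0 z hz0, Units.ext (by simpa using hz)⟩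

theorem mem_mul_of_pow_mem_mul {G : Type*} [CommGroup G] {U V : Subgroup G} {u : G} {n : ℕ}
    (hU : ∀ c : G, c ^ n ∈ U → c ∈ U) (hV : ∀ c : G, c ^ n ∈ V → c ∈ V)
    (hroot : ∀ a ∈ U, ∃ c : G, c ^ n = a) (h : u ^ n ∈ (U : Set G) * V) :
    u ∈ (U : Set G) * V := by
  obtain ⟨a, ha, b, hb, hab⟩ := h
  obtain ⟨c, rfl⟩ := hroot a ha
  have hquot : (u * c⁻¹) ^ n = b := by
    rw [mul_pow, inv_pow, ← hab, mul_inv_cancel_comm]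
  exact ⟨c, hU c ha, u * c⁻¹, hV _ (hquot ▸ hb), mul_inv_cancel_comm_assoc c u⟩

/-- Let `K` be an algebraically closed field. If `U` and `V` are radical subgroups of
`Kˣ`, then the product set `U·V` — which is the subgroup generated by `U` and `V` —
is again a radical subgroup of `Kˣ`. -/
theorem mul_radical_subgroups (K : Type*) [Field K] [IsAlgClosed K]
    (U V : Subgroup Kˣ) (hU : IsRadicalSubgroup U) (hV : IsRadicalSubgroup V) :
    (U : Set Kˣ) * (V : Set Kˣ) = ((U ⊔ V : Subgroup Kˣ) : Set Kˣ) ∧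
      ∀ (u : Kˣ) (n : ℕ), 1 ≤ n → u ^ n ∈ (U : Set Kˣ) * (V : Set Kˣ) →
        u ∈ (U : Set Kˣ) * (V : Set Kˣ) :=
  -- `Subgroup.mul_normal` applies since every subgroup of the commutative group `Kˣ` is normal.
  ⟨(Subgroup.mul_normal U V).symm, fun _ n hn =>
    mem_mul_of_pow_mem_mul (hU · n hn) (hV · n hn)
      (fun a _ => IsAlgClosed.exists_units_pow_eq a hn)⟩
end

section
/- Let L be a first-order language, M an L-structure, and C a subset of M. Let ⫝ be a ternary relation on subsets of M (finite tuples being identified with the sets of their coordinates) satisfying: (Symmetry) if A ⫝_C B then B ⫝_C A; (Monotonicity) if A ⫝_C B ∪ D then A ⫝_C B; (Existence) B ⫝_C C for every B; and (Strong Finite Character over C) for all finite tuples a, b from M, if ¬(a ⫝_C b) then there exist an L-formula φ(x, y, z) and a finite tuple e from C such that M ⊨ φ(a, b, e) and every tuple a' from M with M ⊨ φ(a', b, e) satisfies ¬(a' ⫝_C b). Let a, b be finite tuples from M such that the type of a over C ∪ b is finitely satisfiable in C, i.e. for every L-formula ψ(x, y, z) and every finite tuple c from C with M ⊨ ψ(a,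 b, c), there is a tuple a'' from C with M ⊨ ψ(a'', b, c). Then a ⫝_C b. -/
open FirstOrder

/-! Strong finite character turns a failure of `a ⫝_C b` into a formula over `C` all of whose
realizations are dependent on `b`. By finite satisfiability that formula is realized by a tuple
from `C`, yet every subset of `C` is independent over `C` from everything. -/

theorem ind_of_subset_base {M : Type*} {C : Set M} {ind : Set M → Set M → Set M → Prop}
    (hsym : ∀ A B : Set M, ind A C B → ind B C A)
    (hmono : ∀ A B D : Set M, ind A C (B ∪ D) → ind A C B)
    (hex : ∀ B : Set M, ind B C C) {A : Set M} (hA : A ⊆ C) (B : Set M) : ind A C B := by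
  have hBC : ind B C (A ∪ C) := by
    rw [Set.union_eq_self_of_subset_left hA]
    exact hex B
  exact hsym B A (hmono B A C hBC)

/-- Let `⫝` be a ternary relation on subsets of an `L`-structure `M` satisfying
Symmetry, Monotonicity, Existence and Strong Finite Character over a set `C`
(finite tuples being identified with the sets of their coordinates). If the type of
a tuple `a` over `C ∪ b` is finitely satisfiable in `C`, then `a ⫝_C b`. -/
theorem finitely_satisfiable_implies_ind {L : Language} {M : Type*} [L.Structure M]
    (C : Set M) (ind : Set M → Set M → Set M → Prop)
    -- Symmetry
    (hsym : ∀ A B : Set M, ind A C B → ind B C A)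
    -- Monotonicity
    (hmono : ∀ A B D : Set M, ind A C (B ∪ D) → ind A C B)
    -- Existence
    (hex : ∀ B : Set M, ind B C C)
    -- Strong Finite Character over C
    (hsfc : ∀ (n m : ℕ) (a : Fin n → M) (b : Fin m → M),
      ¬ ind (Set.range a) C (Set.range b) →
      ∃ (k : ℕ) (φ : L.Formula ((Fin n ⊕ Fin m) ⊕ Fin k)) (e : Fin k → M),
        (∀ i, e i ∈ C) ∧ φ.Realize (Sum.elim (Sum.elim a b) e) ∧
        ∀ a' : Fin n → M, φ.Realize (Sum.elim (Sum.elim a' b) e) →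
          ¬ ind (Set.range a') C (Set.range b))
    {n m : ℕ} (a : Fin n → M) (b : Fin m → M)
    -- the type of `a` over `C ∪ b` is finitely satisfiable in `C`
    (hfs : ∀ (k : ℕ) (ψ : L.Formula ((Fin n ⊕ Fin m) ⊕ Fin k)) (c : Fin k → M),
      (∀ i, c i ∈ C) → ψ.Realize (Sum.elim (Sum.elim a b) c) →
      ∃ a'' : Fin n → M, (∀ i, a'' i ∈ C) ∧ ψ.Realize (Sum.elim (Sum.elim a'' b) c)) :
    ind (Set.range a) C (Set.range b) := by
  by_contra hdep
  obtain ⟨k, φ, e, he, hφa, hφ_dep⟩ := hsfc n m a b hdep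
  obtain ⟨a'', ha''C, hφa''⟩ := hfs k φ e he hφa
  exact hφ_dep a'' hφa''
    (ind_of_subset_base hsym hmono hex (Set.range_subset_iff.2 ha''C) _)
end
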